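/- Let C be an isostatic graph with at least two edges. Then exactly one of the following holds: (a) every pair of distinct clusters of C has trivial intersection, and the union of all clusters of C equals C (in particular, every edge of C is contained in some cluster of C); or (b) there exist two distinct clusters of C whose union equals C and whose intersection is not trivial. -/
import Mathlib


/-- A finite combinatorial graph: a finite vertex set and a finite set of edges,
each edge an unordered pair of distinct vertices whose endpoints lie in the vertex set. -/
structure CGraph (α : Type) [DecidableEq α] where
  verts : Finset α
  edges : Finset (Sym2 α)
  not_diag : ∀ e ∈ edges, ¬ e.IsDiag
  endpoints_mem : ∀ e ∈ edges, ∀ v ∈ e, v ∈ verts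

namespace CGraph

variable {α : Type} [DecidableEq α]

/-- Subgraph relation (componentwise containment). -/
def IsSubgraph (H G : CGraph α) : Prop :=
  H.verts ⊆ G.verts ∧ H.edges ⊆ G.edges

/-- Componentwise union of two graphs. -/
def union (G H : CGraph α) : CGraph α where
  verts := G.verts ∪ H.verts
  edges := G.edges ∪ H.edges
  not_diag := by
    intro e he
    rcases Finset.mem_union.1 he with h | h
    · exact G.not_diag e h
    · exact H.not_diag e h
  endpoints_mem := by
    intro e he v hv
    rcases Finset.mem_union.1 he with h | h
    · exact Finset.mem_union_left _ (G.endpoints_mem e h v hv)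
    · exact Finset.mem_union_right _ (H.endpoints_mem e h v hv)

/-- Componentwise intersection of two graphs. -/
def inter (G H : CGraph α) : CGraph α where
  verts := G.verts ∩ H.verts
  edges := G.edges ∩ H.edges
  not_diag := fun e he => G.not_diag e (Finset.mem_inter.1 he).1
  endpoints_mem := fun e he v hv => Finset.mem_inter.2
    ⟨G.endpoints_mem e (Finset.mem_inter.1 he).1 v hv,
     H.endpoints_mem e (Finset.mem_inter.1 he).2 v hv⟩

/-- The empty graph. -/
def empty : CGraph α := ⟨∅, ∅, by simp, by simp⟩

/-- Union of a list of graphs. -/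
def listUnion : List (CGraph α) → CGraph α
  | [] => empty
  | g :: gs => g.union (listUnion gs)

/-- A graph is trivial if it has at most one vertex. -/
def Trivial (G : CGraph α) : Prop := G.verts.card ≤ 1

/-- (2,3)-sparsity: every subgraph on at least 2 vertices has at most `2|V'| - 3` edges
(stated additively to avoid truncated subtraction). -/
def Sparse23 (G : CGraph α) : Prop :=
  ∀ H : CGraph α, H.IsSubgraph G → 2 ≤ H.verts.card →
    H.edges.card + 3 ≤ 2 * H.verts.card

/-- Isostatic (Laman-tight): (2,3)-sparse with `|E| = 2|V| - 3`. -/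
def Isostatic (G : CGraph α) : Prop :=
  G.Sparse23 ∧ G.edges.card + 3 = 2 * G.verts.card

/-- Underconstrained: (2,3)-sparse, at least two vertices, and `|E| < 2|V| - 3`. -/
def Underconstrained (G : CGraph α) : Prop :=
  G.Sparse23 ∧ 2 ≤ G.verts.card ∧ G.edges.card + 3 < 2 * G.verts.card

/-- A graph consisting of a single edge together with its two endpoints. -/
def IsSingleEdge (G : CGraph α) : Prop :=
  ∃ u v : α, u ≠ v ∧ G.verts = {u, v} ∧ G.edges = {s(u, v)}

/-- A cluster of `C`: a proper isostatic subgraph of `C` that is vertex-maximal among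
proper isostatic subgraphs of `C`. -/
def IsCluster (D C : CGraph α) : Prop :=
  D.IsSubgraph C ∧ D ≠ C ∧ D.Isostatic ∧
  ∀ D' : CGraph α, D'.IsSubgraph C → D' ≠ C → D'.Isostatic → ¬ D.verts ⊂ D'.verts

/-- Every pair of distinct clusters of `C` has trivial intersection. -/
def PairwiseTrivialClusters (C : CGraph α) : Prop :=
  ∀ D₁ D₂ : CGraph α, IsCluster D₁ C → IsCluster D₂ C → D₁ ≠ D₂ → (D₁.inter D₂).Trivial

end CGraph

/-- Alternative (a): every pair of distinct clusters of `C` has trivial intersection,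
and the union of all clusters of `C` equals `C` (every vertex and every edge of `C`
belongs to some cluster; in particular every edge lies in some cluster). -/
def AlternativeA {α : Type} [DecidableEq α] (C : CGraph α) : Prop :=
  C.PairwiseTrivialClusters ∧
  (∀ v ∈ C.verts, ∃ D : CGraph α, CGraph.IsCluster D C ∧ v ∈ D.verts) ∧
  (∀ e ∈ C.edges, ∃ D : CGraph α, CGraph.IsCluster D C ∧ e ∈ D.edges)

/-- Alternative (b): there exist two distinct clusters of `C` whose union equals `C`
and whose intersection is not trivial. -/
def AlternativeB {α : Type} [DecidableEq α] (C : CGraph α) : Prop :=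
  ∃ D₁ D₂ : CGraph α, CGraph.IsCluster D₁ C ∧ CGraph.IsCluster D₂ C ∧ D₁ ≠ D₂ ∧
    D₁.union D₂ = C ∧ ¬ (D₁.inter D₂).Trivial

namespace CGraph

variable {α : Type} [DecidableEq α]

lemma ext' {G H : CGraph α} (hv : G.verts = H.verts) (he : G.edges = H.edges) : G = H := by
  cases G; cases H; simp_all

lemma IsSubgraph.trans' {G H K : CGraph α} (h1 : G.IsSubgraph H) (h2 : H.IsSubgraph K) :
    G.IsSubgraph K := ⟨h1.1.trans h2.1, h1.2.trans h2.2⟩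

lemma Isostatic.two_le_verts {G : CGraph α} (h : G.Isostatic) : 2 ≤ G.verts.card := by
  have := h.2; omega

lemma union_isSubgraph {G H C : CGraph α} (h1 : G.IsSubgraph C) (h2 : H.IsSubgraph C) :
    (G.union H).IsSubgraph C :=
  ⟨Finset.union_subset h1.1 h2.1, Finset.union_subset h1.2 h2.2⟩

lemma inter_isSubgraph {G H C : CGraph α} (h1 : G.IsSubgraph C) :
    (G.inter H).IsSubgraph C :=
  ⟨Finset.inter_subset_left.trans h1.1, Finset.inter_subset_left.trans h1.2⟩

/-- Gluing lemma: the union of two isostatic subgraphs of a sparse graph whose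
vertex sets share at least two vertices is isostatic. -/
lemma glue {C D1 D2 : CGraph α} (hC : C.Sparse23)
    (h1 : D1.IsSubgraph C) (h2 : D2.IsSubgraph C)
    (hi1 : D1.Isostatic) (hi2 : D2.Isostatic)
    (hk : 2 ≤ (D1.inter D2).verts.card) : (D1.union D2).Isostatic := by
  have hsubU : (D1.union D2).IsSubgraph C := union_isSubgraph h1 h2
  constructor
  · intro H hH hHv
    exact hC H (hH.trans' hsubU) hHv
  · have hcu : (D1.verts ∪ D2.verts).card + (D1.verts ∩ D2.verts).card
        = D1.verts.card + D2.verts.card := Finset.card_union_add_card_inter _ _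
    have hce : (D1.edges ∪ D2.edges).card + (D1.edges ∩ D2.edges).card
        = D1.edges.card + D2.edges.card := Finset.card_union_add_card_inter _ _
    have hinter : (D1.inter D2).edges.card + 3 ≤ 2 * (D1.inter D2).verts.card :=
      hC _ ((inter_isSubgraph h1 : (D1.inter D2).IsSubgraph C)) hk
    have h2u : 2 ≤ (D1.union D2).verts.card := by
      have := Finset.card_le_card (Finset.subset_union_left : D1.verts ⊆ D1.verts ∪ D2.verts)
      have := hi1.two_le_verts
      simp only [union] at *
      omega
    have hunion : (D1.union D2).edges.card + 3 ≤ 2 * (D1.union D2).verts.card :=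
      hC _ hsubU h2u
    have e1 := hi1.2
    have e2 := hi2.2
    simp only [union, inter] at *
    omega

/-- An isostatic subgraph of an isostatic graph with the same vertex set equals it. -/
lemma eq_of_verts_eq {C D : CGraph α} (hC : C.Isostatic) (hD : D.Isostatic)
    (hsub : D.IsSubgraph C) (hv : D.verts = C.verts) : D = C := by
  refine ext' hv (Finset.eq_of_subset_of_card_le hsub.2 ?_)
  have := hC.2; have := hD.2; rw [hv] at this; omega

/-- The single-edge graph on two distinct vertices. -/
def singleEdge (u v : α) (h : u ≠ v) : CGraph α where
  verts := {u, v}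
  edges := {s(u, v)}
  not_diag := by
    intro e he
    simp only [Finset.mem_singleton] at he
    subst he
    simpa [Sym2.mk_isDiag_iff] using h
  endpoints_mem := by
    intro e he w hw
    simp only [Finset.mem_singleton] at he
    subst he
    rcases Sym2.mem_iff.1 hw with rfl | rfl <;> simp

lemma singleEdge_isostatic (u v : α) (h : u ≠ v) : (singleEdge u v h).Isostatic := by
  have hv : (singleEdge u v h).verts.card = 2 := by
    simp [singleEdge, Finset.card_insert_of_notMem, h]
  constructor
  · intro H hH hH2
    have h1 : H.edges.card ≤ 1 := by
      have := Finset.card_le_card hH.2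
      simpa [singleEdge] using this
    omega
  · have h2 : ({u, v} : Finset α).card = 2 := by
      rw [Finset.card_insert_of_notMem (by simpa using h), Finset.card_singleton]
    simp [singleEdge, h2]

/-- Every edge of an isostatic graph with at least two edges lies in a cluster. -/
lemma exists_cluster_of_edge {C : CGraph α} (hC : C.Isostatic) (hE : 2 ≤ C.edges.card)
    {e : Sym2 α} (he : e ∈ C.edges) :
    ∃ D : CGraph α, IsCluster D C ∧ e ∈ D.edges := by
  induction e using Sym2.ind with
  | _ u v =>
  have huv : u ≠ v := by
    intro h; exact C.not_diag _ he (by simp [Sym2.mk_isDiag_iff, h])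
  set S : CGraph α := singleEdge u v huv with hS
  have hSiso : S.Isostatic := singleEdge_isostatic u v huv
  have hSsub : S.IsSubgraph C := by
    constructor
    · intro w hw
      simp only [hS, singleEdge, Finset.mem_insert, Finset.mem_singleton] at hw
      rcases hw with rfl | rfl
      · exact C.endpoints_mem _ he w (by simp)
      · exact C.endpoints_mem _ he w (by simp)
    · intro f hf
      simp only [hS, singleEdge, Finset.mem_singleton] at hf
      subst hf; exact he
  have hSne : S ≠ C := by
    intro h
    have : C.edges.card = 1 := by rw [← h]; simp [hS, singleEdge]
    omega
  -- the property of being a proper isostatic subgraph containing e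
  set P : CGraph α → Prop := fun D =>
    D.IsSubgraph C ∧ D ≠ C ∧ D.Isostatic ∧ s(u, v) ∈ D.edges with hP
  set T : Set ℕ := {k | ∃ D, P D ∧ D.verts.card = k} with hT
  have hne : T.Nonempty := ⟨S.verts.card, S, ⟨hSsub, hSne, hSiso, by simp [hS, singleEdge]⟩, rfl⟩
  have hbdd : BddAbove T := by
    refine ⟨C.verts.card, ?_⟩
    rintro k ⟨D, hD, rfl⟩
    exact Finset.card_le_card hD.1.1
  obtain ⟨D, hDP, hDcard⟩ := Nat.sSup_mem hne hbdd
  refine ⟨D, ⟨hDP.1, hDP.2.1, hDP.2.2.1, ?_⟩, hDP.2.2.2⟩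
  intro D'' hsub'' hne'' hiso'' hlt
  -- glue D'' with S; since endpoints of e lie in D''.verts the union has verts D''.verts
  have huS : u ∈ D''.verts := hlt.1 (D.endpoints_mem _ hDP.2.2.2 u (by simp))
  have hvS : v ∈ D''.verts := hlt.1 (D.endpoints_mem _ hDP.2.2.2 v (by simp))
  have hSsubverts : S.verts ⊆ D''.verts := by
    intro w hw
    simp only [hS, singleEdge, Finset.mem_insert, Finset.mem_singleton] at hw
    rcases hw with rfl | rfl
    · exact huS
    · exact hvS
  have hik : 2 ≤ (D''.inter S).verts.card := by
    have : (D''.inter S).verts = S.verts := by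
      simp only [inter]
      exact Finset.inter_eq_right.2 hSsubverts
    rw [this]
    have : S.verts.card = 2 := by simp [hS, singleEdge, Finset.card_insert_of_notMem, huv]
    omega
  have hUiso : (D''.union S).Isostatic := glue hC.1 hsub'' hSsub hiso'' hSiso hik
  have hUverts : (D''.union S).verts = D''.verts := by
    simp only [union]
    exact Finset.union_eq_left.2 hSsubverts
  have hUsub : (D''.union S).IsSubgraph C := union_isSubgraph hsub'' hSsub
  have hUne : D''.union S ≠ C := by
    intro h
    apply hne''
    apply eq_of_verts_eq hC hiso'' hsub''
    rw [← hUverts, h]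
  have hUP : P (D''.union S) := ⟨hUsub, hUne, hUiso, by
    simp only [union, Finset.mem_union]
    right; simp [hS, singleEdge]⟩
  have hle : (D''.union S).verts.card ≤ D.verts.card := by
    rw [hDcard]
    exact le_csSup hbdd ⟨_, hUP, rfl⟩
  rw [hUverts] at hle
  have := Finset.card_lt_card hlt
  omega

/-- Every vertex of an isostatic graph with at least two edges lies on an edge. -/
lemma exists_edge_of_vert {C : CGraph α} (hC : C.Isostatic) (hE : 2 ≤ C.edges.card)
    {v : α} (hv : v ∈ C.verts) : ∃ e ∈ C.edges, v ∈ e := by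
  by_contra h
  push_neg at h
  set H : CGraph α := ⟨C.verts.erase v, C.edges, C.not_diag, by
    intro e he w hw
    refine Finset.mem_erase.2 ⟨?_, C.endpoints_mem e he w hw⟩
    rintro rfl
    exact h e he hw⟩ with hH
  have hHsub : H.IsSubgraph C := ⟨Finset.erase_subset _ _, subset_rfl⟩
  have hcard : H.verts.card = C.verts.card - 1 := by
    simp [hH, Finset.card_erase_of_mem hv]
  have hCv : 3 ≤ C.verts.card := by have := hC.2; omega
  have h2H : 2 ≤ H.verts.card := by rw [hcard]; omega
  have := hC.1 H hHsub h2H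
  have hHE : H.edges.card = C.edges.card := rfl
  have := hC.2
  omega

end CGraph

/-- For an isostatic graph `C` with at least two edges, exactly one of
alternatives (a) and (b) holds. -/
theorem cluster_dichotomy
    {α : Type} [DecidableEq α] (C : CGraph α)
    (hC : C.Isostatic) (hE : 2 ≤ C.edges.card) :
    Xor' (AlternativeA C) (AlternativeB C) := by
  by_cases h : ∃ D₁ D₂ : CGraph α, CGraph.IsCluster D₁ C ∧ CGraph.IsCluster D₂ C ∧
      D₁ ≠ D₂ ∧ ¬ (D₁.inter D₂).Trivial
  · -- alternative B
    obtain ⟨D₁, D₂, h1, h2, hne, hnt⟩ := h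
    have hk : 2 ≤ (D₁.inter D₂).verts.card := by
      unfold CGraph.Trivial at hnt; omega
    have hUiso : (D₁.union D₂).Isostatic :=
      CGraph.glue hC.1 h1.1 h2.1 h1.2.2.1 h2.2.2.1 hk
    have hUsub : (D₁.union D₂).IsSubgraph C := CGraph.union_isSubgraph h1.1 h2.1
    -- neither vertex set contains the other
    have hnotsub : ∀ A B : CGraph α, CGraph.IsCluster A C → CGraph.IsCluster B C →
        A ≠ B → 2 ≤ (A.inter B).verts.card → ¬ B.verts ⊆ A.verts := by
      intro A B hA hB hAB hk2 hsub
      rcases eq_or_ne B.verts A.verts with hveq | hvne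
      · -- same vertex sets: union isostatic forces equal edges
        have hUiso' : (A.union B).Isostatic :=
          CGraph.glue hC.1 hA.1 hB.1 hA.2.2.1 hB.2.2.1 hk2
        have hUv : (A.union B).verts = A.verts := by
          simp only [CGraph.union]; rw [hveq]; simp
        have hcards : (A.union B).edges.card = A.edges.card := by
          have hu := hUiso'.2
          have ha := hA.2.2.1.2
          rw [hUv] at hu
          omega
        have hAe : A.edges ⊆ (A.union B).edges := Finset.subset_union_left
        have hBe : B.edges ⊆ (A.union B).edges := Finset.subset_union_right
        have hEeq : (A.union B).edges = A.edges := (Finset.eq_of_subset_of_card_le hAe hcards.le).symm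
        have : B.edges ⊆ A.edges := hEeq ▸ hBe
        have hBcard : B.edges.card = A.edges.card := by
          have := hA.2.2.1.2; have := hB.2.2.1.2; rw [hveq] at this; omega
        exact hAB ((CGraph.ext' hveq (Finset.eq_of_subset_of_card_le this hBcard.ge)).symm)
      · -- B.verts ⊊ A.verts contradicts maximality of B
        exact hB.2.2.2 A hA.1 hA.2.1 hA.2.2.1 ⟨hsub, fun h' => hvne (subset_antisymm hsub h')⟩
    have hne21 : D₂ ≠ D₁ := hne.symm
    have hkint : (D₂.inter D₁).verts = (D₁.inter D₂).verts := Finset.inter_comm _ _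
    have hns1 : ¬ D₂.verts ⊆ D₁.verts := hnotsub D₁ D₂ h1 h2 hne hk
    have hns2 : ¬ D₁.verts ⊆ D₂.verts := hnotsub D₂ D₁ h2 h1 hne21 (by rw [hkint]; exact hk)
    have hstrict : D₁.verts ⊂ (D₁.union D₂).verts := by
      simp only [CGraph.union]
      exact ⟨Finset.subset_union_left, fun h' => hns1 fun x hx =>
        h' (Finset.mem_union_right _ hx)⟩
    have hUeq : D₁.union D₂ = C := by
      by_contra hUne
      exact h1.2.2.2 (D₁.union D₂) hUsub hUne hUiso hstrict
    have hB : AlternativeB C := ⟨D₁, D₂, h1, h2, hne, hUeq, hnt⟩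
    refine Or.inr ⟨hB, ?_⟩
    intro hA
    exact hnt (hA.1 D₁ D₂ h1 h2 hne)
  · -- alternative A
    push_neg at h
    have hA : AlternativeA C := by
      refine ⟨?_, ?_, ?_⟩
      · intro D₁ D₂ h1 h2 hne
        exact h D₁ D₂ h1 h2 hne
      · intro v hv
        obtain ⟨e, he, hve⟩ := CGraph.exists_edge_of_vert hC hE hv
        obtain ⟨D, hD, heD⟩ := CGraph.exists_cluster_of_edge hC hE he
        exact ⟨D, hD, D.endpoints_mem e heD v hve⟩
      · intro e he
        obtain ⟨D, hD, heD⟩ := CGraph.exists_cluster_of_edge hC hE he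
        exact ⟨D, hD, heD⟩
    refine Or.inl ⟨hA, ?_⟩
    rintro ⟨D₁, D₂, h1, h2, hne, -, hnt⟩
    exact hnt (hA.1 D₁ D₂ h1 h2 hne)
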